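/- For every ξ ≥ 0 the map ψ(·,ξ) is Lipschitz with constant ψ̂'(0): for all w₁, w₂ ∈ ℝ, |ψ(w₁,ξ) − ψ(w₂,ξ)| ≤ ψ̂'(0)·|w₁ − w₂|. -/

import Mathlib

/-!
Since `0 ≤ ψ̂' ≤ ψ̂'(0)` on `[0, ∞)` (concavity makes `ψ̂'` antitone, and a concave function
that ends up constant cannot have a negative slope), the mean value inequality makes `ψ̂`
`ψ̂'(0)`-Lipschitz on `[ξ, ∞)`. On `[-ξ, ξ]` the quadratic branch changes by
`ψ̂'(ξ) (w₁ - w₂)(w₁ + w₂) / (2ξ)` with `|w₁ + w₂| ≤ 2ξ`. The two branches agree at `|w| = ξ`,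
so the bounds glue, and `ψ(w, ξ)` depends only on `|w|`, where `||w₁| - |w₂|| ≤ |w₁ - w₂|`.
-/

/-- The cohesive density ψ(w,ξ) = ψ̂(|w|) if |w| ≥ ξ, and
ψ(w,ξ) = ψ̂(ξ) − ψ̂'(ξ)·(ξ² − w²)/(2ξ) if |w| < ξ. -/
noncomputable def cohesive (psih psih' : ℝ → ℝ) (w ξ : ℝ) : ℝ :=
  if ξ ≤ |w| then psih |w| else psih ξ - psih' ξ * ((ξ ^ 2 - w ^ 2) / (2 * ξ))

open Set

lemma ConcaveOn.antitoneOn_of_hasDerivWithinAt {S : Set ℝ} {f f' : ℝ → ℝ}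
    (hf : ConcaveOn ℝ S f) (hf' : ∀ x ∈ S, HasDerivWithinAt f (f' x) S x) :
    AntitoneOn f' S := by
  intro x hx y hy hxy
  rcases hxy.eq_or_lt with rfl | hxy
  · rfl
  exact (hf.le_slope_of_hasDerivWithinAt hx hy hxy (hf' y hy)).trans
    (hf.slope_le_of_hasDerivWithinAt hx hy hxy (hf' x hx))

lemma ConcaveOn.nonneg_of_hasDerivWithinAt_of_forall_ge {f : ℝ → ℝ} {a c d x : ℝ}
    (hf : ConcaveOn ℝ (Ici a) f) (hc : ∀ y ≥ c, f y = f c) (hx : a ≤ x)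
    (hd : HasDerivWithinAt f d (Ici a) x) : 0 ≤ d := by
  set y := max x c + 1
  have hxy : x < y := by linarith [le_max_left x c]
  have hcy : c ≤ y := by linarith [le_max_right x c]
  have hy : y ∈ Ici a := by simp only [mem_Ici]; linarith
  have hz : y + 1 ∈ Ici a := by simp only [mem_Ici]; linarith
  -- slopes of a concave function decrease, and the slope on `[y, y + 1]` is `0`
  calc 0 = (f (y + 1) - f y) / (y + 1 - y) := by rw [hc y hcy, hc (y + 1) (by linarith)]; simp
    _ ≤ (f y - f x) / (y - x) := hf.slope_anti_adjacent hx hz hxy (lt_add_one y)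
    _ = slope f x y := (slope_def_field f x y).symm
    _ ≤ d := hf.slope_le_of_hasDerivWithinAt hx hy hxy hd

lemma Set.OrdConnected.abs_sub_le_mul_of_Iic_of_Ici {s : Set ℝ} (hs : s.OrdConnected)
    {F : ℝ → ℝ} {a L : ℝ}
    (hle : ∀ x ∈ s, ∀ y ∈ s, x ≤ a → y ≤ a → |F x - F y| ≤ L * |x - y|)
    (hge : ∀ x ∈ s, ∀ y ∈ s, a ≤ x → a ≤ y → |F x - F y| ≤ L * |x - y|)
    {x y : ℝ} (hx : x ∈ s) (hy : y ∈ s) : |F x - F y| ≤ L * |x - y| := by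
  wlog hxy : x ≤ y generalizing x y
  · rw [abs_sub_comm, abs_sub_comm x]
    exact this hy hx (le_of_not_ge hxy)
  rcases le_total y a with hya | hay
  · exact hle x hx y hy (hxy.trans hya) hya
  rcases le_total a x with hax | hxa
  · exact hge x hx y hy hax hay
  have ha : a ∈ s := hs.out hx hy ⟨hxa, hay⟩
  calc |F x - F y| ≤ |F x - F a| + |F a - F y| := abs_sub_le _ _ _
    _ ≤ L * |x - a| + L * |a - y| :=
        add_le_add (hle x hx a ha hxa le_rfl) (hge a ha y hy le_rfl hay)
    _ = L * |x - y| := by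
        rw [abs_of_nonpos (sub_nonpos.2 hxa), abs_of_nonpos (sub_nonpos.2 hay),
          abs_of_nonpos (sub_nonpos.2 hxy)]
        ring

section Cohesive

variable (f f' : ℝ → ℝ)

lemma cohesive_abs (w ξ : ℝ) : cohesive f f' |w| ξ = cohesive f f' w ξ := by
  simp only [cohesive, abs_abs, sq_abs]

lemma cohesive_of_le_abs {w ξ : ℝ} (h : ξ ≤ |w|) : cohesive f f' w ξ = f |w| := if_pos h

lemma cohesive_of_abs_le {w ξ : ℝ} (h : |w| ≤ ξ) :
    cohesive f f' w ξ = f ξ - f' ξ * ((ξ ^ 2 - w ^ 2) / (2 * ξ)) := by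
  unfold cohesive
  split_ifs with h'
  · have hw : ξ = |w| := le_antisymm h' h
    rw [← hw, ← sq_abs w, ← hw]
    simp
  · rfl

lemma abs_cohesive_sub_le_of_abs_le {ξ w₁ w₂ : ℝ} (hf' : 0 ≤ f' ξ) (h₁ : |w₁| ≤ ξ)
    (h₂ : |w₂| ≤ ξ) :
    |cohesive f f' w₁ ξ - cohesive f f' w₂ ξ| ≤ f' ξ * |w₁ - w₂| := by
  rw [cohesive_of_abs_le f f' h₁, cohesive_of_abs_le f f' h₂]
  rcases (abs_nonneg w₁).trans h₁ |>.eq_or_lt with rfl | hξ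
  · simp [abs_nonpos_iff.1 h₁, abs_nonpos_iff.1 h₂]
  have hsum : |w₁ + w₂| ≤ 2 * ξ := (abs_add_le _ _).trans (by linarith)
  calc |f ξ - f' ξ * ((ξ ^ 2 - w₁ ^ 2) / (2 * ξ)) - (f ξ - f' ξ * ((ξ ^ 2 - w₂ ^ 2) / (2 * ξ)))|
      = |f' ξ * (w₁ - w₂) * ((w₁ + w₂) / (2 * ξ))| := by congr 1; ring
    _ = f' ξ * |w₁ - w₂| * (|w₁ + w₂| / (2 * ξ)) := by
        rw [abs_mul, abs_mul, abs_div, abs_of_nonneg hf', abs_of_pos (by linarith : 0 < 2 * ξ)]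
    _ ≤ f' ξ * |w₁ - w₂| * 1 := by
        gcongr
        exact (div_le_one (by linarith)).2 hsum
    _ = f' ξ * |w₁ - w₂| := mul_one _

end Cohesive

theorem cohesive_lipschitz_w_general
    (ξc : ℝ) (psih psih' : ℝ → ℝ)
    (hconc : ConcaveOn ℝ (Set.Ici 0) psih)
    (hconst : ∀ w ≥ ξc, psih w = psih ξc)
    (hC1 : ∀ w ∈ Set.Ici (0:ℝ), HasDerivWithinAt psih (psih' w) (Set.Ici 0) w) :
    ∀ ξ ≥ (0:ℝ), ∀ w₁ w₂ : ℝ,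
      |cohesive psih psih' w₁ ξ - cohesive psih psih' w₂ ξ| ≤ psih' 0 * |w₁ - w₂| := by
  intro ξ hξ w₁ w₂
  have hle : ∀ x ≥ (0:ℝ), psih' x ≤ psih' 0 := fun x hx =>
    hconc.antitoneOn_of_hasDerivWithinAt hC1 self_mem_Ici hx hx
  have hnonneg : ∀ x ≥ (0:ℝ), 0 ≤ psih' x := fun x hx =>
    hconc.nonneg_of_hasDerivWithinAt_of_forall_ge hconst hx (hC1 x hx)
  have hinner : ∀ x ∈ Ici (0:ℝ), ∀ y ∈ Ici (0:ℝ), x ≤ ξ → y ≤ ξ →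
      |cohesive psih psih' x ξ - cohesive psih psih' y ξ| ≤ psih' 0 * |x - y| :=
    fun x hx y hy hxξ hyξ =>
      (abs_cohesive_sub_le_of_abs_le psih psih' (hnonneg ξ hξ) (by rwa [abs_of_nonneg hx])
        (by rwa [abs_of_nonneg hy])).trans (by gcongr; exact hle ξ hξ)
  have houter : ∀ x ∈ Ici (0:ℝ), ∀ y ∈ Ici (0:ℝ), ξ ≤ x → ξ ≤ y →
      |cohesive psih psih' x ξ - cohesive psih psih' y ξ| ≤ psih' 0 * |x - y| := by
    intro x hx y hy hξx hξy
    rw [cohesive_of_le_abs psih psih' (hξx.trans (le_abs_self x)),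
      cohesive_of_le_abs psih psih' (hξy.trans (le_abs_self y)), abs_of_nonneg (mem_Ici.1 hx),
      abs_of_nonneg (mem_Ici.1 hy)]
    exact (convex_Ici 0).norm_image_sub_le_of_norm_hasDerivWithin_le hC1
      (fun z hz => (abs_of_nonneg (hnonneg z hz)).trans_le (hle z hz)) hy hx
  rw [← cohesive_abs psih psih' w₁, ← cohesive_abs psih psih' w₂]
  calc _ ≤ psih' 0 * |(|w₁| - |w₂|)| :=
        ordConnected_Ici.abs_sub_le_mul_of_Iic_of_Ici hinner houter (abs_nonneg w₁)
          (abs_nonneg w₂)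
    _ ≤ psih' 0 * |w₁ - w₂| :=
        mul_le_mul_of_nonneg_left (abs_abs_sub_abs_le_abs_sub w₁ w₂) (hnonneg 0 le_rfl)

/-- for every ξ ≥ 0, ψ(·,ξ) is Lipschitz with constant ψ̂'(0). -/
theorem cohesive_lipschitz_w
    (ξc : ℝ) (hξc : 0 < ξc) (psih psih' psih'' : ℝ → ℝ)
    (hnn : ∀ w ≥ (0:ℝ), 0 ≤ psih w)
    (hconc : ConcaveOn ℝ (Set.Ici 0) psih)
    (h0 : psih 0 = 0)
    (hpos : ∀ w > (0:ℝ), 0 < psih w)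
    (hconst : ∀ w ≥ ξc, psih w = psih ξc)
    (hC1 : ∀ w ∈ Set.Ici (0:ℝ), HasDerivWithinAt psih (psih' w) (Set.Ici 0) w)
    (hC1c : ContinuousOn psih' (Set.Ici 0))
    (hC2 : ∀ w ∈ Set.Icc (0:ℝ) ξc, HasDerivWithinAt psih' (psih'' w) (Set.Icc 0 ξc) w)
    (hC2c : ContinuousOn psih'' (Set.Icc 0 ξc)) :
    ∀ ξ ≥ (0:ℝ), ∀ w₁ w₂ : ℝ,
      |cohesive psih psih' w₁ ξ - cohesive psih psih' w₂ ξ| ≤ psih' 0 * |w₁ - w₂| :=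
  cohesive_lipschitz_w_general ξc psih psih' hconc hconst hC1
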